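/- Let G ⊆ ℝ² ≅ ℂ be the equilateral triangle with vertices z_k = exp(2πik/3), k = 0, 1, 2 (i.e. the convex hull of these three points). Then the minimum over t ∈ [0, 2π) of the product of the widths of G in the perpendicular directions (cos t, sin t) and (−sin t, cos t) equals 3√3/2, which is exactly twice the area of G (the area of G is 3√3/4). -/

import Mathlib

/-!
A triangle inscribed in a `W × H` rectangle has area at most `W H / 2`: around the vertex whose
first coordinate lies between the other two, twice the signed area splits into two terms whose
first-coordinate weights have one sign and sum to at most `W`. The triangle `G` lies in the
rectangle with sides along `u` and `u⊥` and side lengths `w_u(G)`, `w_{u⊥}(G)`, so their product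
is at least twice its area, `3√3/2`; for `u = (1, 0)` the widths are `3/2` and `√3`, so the
bound is attained. The area is computed by integrating the vertical sections of `G`.
-/

open MeasureTheory Real

/-- The equilateral triangle spanned by the three cube roots of unity. -/
noncomputable def equilateralTriangle : Set ℂ :=
  convexHull ℝ {z : ℂ | ∃ k : Fin 3, z = Complex.exp (2 * π * k * Complex.I / 3)}

open Set ComplexConjugate

section Convex

variable {E : Type*} [AddCommGroup E] [Module ℝ E] {f : E → ℝ} {s : Set E} {a : E}

lemma IsLinearMap.isGreatest_image_convexHull (hf : IsLinearMap ℝ f) (ha : a ∈ s)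
    (h : ∀ v ∈ s, f v ≤ f a) : IsGreatest (f '' convexHull ℝ s) (f a) :=
  ⟨mem_image_of_mem f (subset_convexHull ℝ s ha),
    forall_mem_image.2 fun _ hz => convexHull_min h (convex_halfSpace_le hf (f a)) hz⟩

lemma IsLinearMap.isLeast_image_convexHull (hf : IsLinearMap ℝ f) (ha : a ∈ s)
    (h : ∀ v ∈ s, f a ≤ f v) : IsLeast (f '' convexHull ℝ s) (f a) :=
  ⟨mem_image_of_mem f (subset_convexHull ℝ s ha),
    forall_mem_image.2 fun _ hz => convexHull_min h (convex_halfSpace_ge hf (f a)) hz⟩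

end Convex

lemma abs_mul_add_mul_le {s t u v W H : ℝ} (hst : 0 ≤ s * t) (hW : |s + t| ≤ W) (hu : |u| ≤ H)
    (hv : |v| ≤ H) : |s * u + t * v| ≤ W * H := by
  have hH : 0 ≤ H := (abs_nonneg u).trans hu
  calc |s * u + t * v| ≤ |s| * H + |t| * H := by
        grw [abs_add_le, abs_mul, abs_mul, hu, hv]
    _ = |s + t| * H := by
        rw [← add_mul, (abs_add_eq_add_abs_iff s t).2 (mul_nonneg_iff.1 hst)]
    _ ≤ W * H := by gcongr

lemma abs_det_le_of_sub_le {x y : Fin 3 → ℝ} {W H : ℝ} (hx : ∀ i j, x i - x j ≤ W)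
    (hy : ∀ i j, y i - y j ≤ H) :
    |(x 1 - x 0) * (y 2 - y 0) - (x 2 - x 0) * (y 1 - y 0)| ≤ W * H := by
  have hx' i j : |x i - x j| ≤ W := abs_sub_le_iff.2 ⟨hx i j, hx j i⟩
  have hy' i j : |y i - y j| ≤ H := abs_sub_le_iff.2 ⟨hy i j, hy j i⟩
  have same_sign : 0 ≤ (x 1 - x 0) * (x 2 - x 1) ∨ 0 ≤ (x 2 - x 1) * (x 0 - x 2) ∨
      0 ≤ (x 0 - x 2) * (x 1 - x 0) := by
    by_contra! h
    nlinarith [mul_pos (neg_pos.2 h.1) (neg_pos.2 h.2.1), sq_nonneg (x 2 - x 1)]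
  rcases same_sign with h | h | h
  · calc _ = |(x 1 - x 0) * (y 2 - y 1) + (x 2 - x 1) * (y 0 - y 1)| := by congr 1; ring
      _ ≤ W * H := abs_mul_add_mul_le h (by simpa using hx' 2 0) (hy' 2 1) (hy' 0 1)
  · calc _ = |(x 2 - x 1) * (y 0 - y 2) + (x 0 - x 2) * (y 1 - y 2)| := by congr 1; ring
      _ ≤ W * H := abs_mul_add_mul_le h (by simpa using hx' 0 1) (hy' 0 2) (hy' 1 2)
  · calc _ = |(x 0 - x 2) * (y 1 - y 0) + (x 1 - x 0) * (y 2 - y 0)| := by congr 1; ring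
      _ ≤ W * H := abs_mul_add_mul_le h (by simpa using hx' 1 2) (hy' 1 0) (hy' 2 0)

def coordAlong (p q : ℝ) (z : ℂ) : ℝ := z.re * p + z.im * q

noncomputable def widthAlong (K : Set ℂ) (p q : ℝ) : ℝ :=
  sSup (coordAlong p q '' K) - sInf (coordAlong p q '' K)

lemma isLinearMap_coordAlong (p q : ℝ) : IsLinearMap ℝ (coordAlong p q) :=
  ⟨fun z w => by simp only [coordAlong, Complex.add_re, Complex.add_im]; ring,
    fun c z => by
      simp only [coordAlong, Complex.real_smul, Complex.re_ofReal_mul, Complex.im_ofReal_mul,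
        smul_eq_mul]
      ring⟩

lemma sub_le_widthAlong {K : Set ℂ} (hK : IsCompact K) (p q : ℝ) {z w : ℂ} (hz : z ∈ K)
    (hw : w ∈ K) : coordAlong p q z - coordAlong p q w ≤ widthAlong K p q := by
  have hc : IsCompact (coordAlong p q '' K) := hK.image (by unfold coordAlong; fun_prop)
  exact sub_le_sub (le_csSup hc.bddAbove (mem_image_of_mem _ hz))
    (csInf_le hc.bddBelow (mem_image_of_mem _ hw))

lemma abs_im_conj_mul_le_widthAlong_mul_widthAlong {K : Set ℂ} (hK : IsCompact K)
    {z : Fin 3 → ℂ} (hz : ∀ i, z i ∈ K) {c s : ℝ} (hcs : c ^ 2 + s ^ 2 = 1) :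
    |(conj (z 1 - z 0) * (z 2 - z 0)).im| ≤ widthAlong K c s * widthAlong K (-s) c := by
  refine le_of_eq_of_le ?_ (abs_det_le_of_sub_le (x := fun i => coordAlong c s (z i))
    (y := fun i => coordAlong (-s) c (z i))
    (fun i j => sub_le_widthAlong hK _ _ (hz i) (hz j))
    (fun i j => sub_le_widthAlong hK _ _ (hz i) (hz j)))
  simp only [coordAlong, Complex.mul_im, Complex.conj_re, Complex.conj_im, Complex.sub_re,
    Complex.sub_im]
  congr 1
  -- the rotated frame multiplies the determinant by `c ^ 2 + s ^ 2`
  linear_combination -(((z 1).re - (z 0).re) * ((z 2).im - (z 0).im) -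
    ((z 2).re - (z 0).re) * ((z 1).im - (z 0).im)) * hcs

lemma widthAlong_convexHull {s : Set ℂ} {p q : ℝ} {a b : ℂ} (ha : a ∈ s) (hb : b ∈ s)
    (hmax : ∀ v ∈ s, coordAlong p q v ≤ coordAlong p q a)
    (hmin : ∀ v ∈ s, coordAlong p q b ≤ coordAlong p q v) :
    widthAlong (convexHull ℝ s) p q = coordAlong p q a - coordAlong p q b := by
  rw [widthAlong, ((isLinearMap_coordAlong p q).isGreatest_image_convexHull ha hmax).csSup_eq,
    ((isLinearMap_coordAlong p q).isLeast_image_convexHull hb hmin).csInf_eq]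

section RegionBetween

variable {α : Type*} [MeasurableSpace α] {μ : Measure α} {f g : α → ℝ} {s : Set α}

theorem volume_region_between_cc_eq_lintegral (hf : Measurable f) (hg : Measurable g)
    (hs : MeasurableSet s) :
    μ.prod volume {p : α × ℝ | p.1 ∈ s ∧ p.2 ∈ Icc (f p.1) (g p.1)} =
      ∫⁻ x in s, ENNReal.ofReal (g x - f x) ∂μ := by
  rw [Measure.prod_apply (measurableSet_region_between_cc hf hg hs), ← lintegral_indicator hs]
  congr 1
  funext x
  by_cases hx : x ∈ s <;> simp [hx, preimage, -mem_Icc, Real.volume_Icc]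

end RegionBetween

noncomputable def unitCubeRoot (k : Fin 3) : ℂ := Complex.exp (2 * π * k * Complex.I / 3)

lemma equilateralTriangle_eq_convexHull :
    equilateralTriangle = convexHull ℝ (range unitCubeRoot) := by
  simp only [equilateralTriangle, unitCubeRoot, range, eq_comm]

lemma unitCubeRoot_eq_mk (k : Fin 3) :
    unitCubeRoot k = ⟨cos (2 * π * (k : ℕ) / 3), sin (2 * π * (k : ℕ) / 3)⟩ := by
  apply Complex.ext <;> simp [unitCubeRoot, Complex.exp_re, Complex.exp_im]

lemma unitCubeRoot_zero : unitCubeRoot 0 = 1 := by simp [unitCubeRoot]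

lemma unitCubeRoot_one : unitCubeRoot 1 = ⟨-1 / 2, √3 / 2⟩ := by
  have : 2 * π * ((1 : Fin 3) : ℕ) / 3 = π - π / 3 := by
    rw [Fin.val_one, Nat.cast_one]; ring
  rw [unitCubeRoot_eq_mk, this, cos_pi_sub, sin_pi_sub, cos_pi_div_three, sin_pi_div_three]
  norm_num

lemma unitCubeRoot_two : unitCubeRoot 2 = ⟨-1 / 2, -(√3 / 2)⟩ := by
  have : 2 * π * ((2 : Fin 3) : ℕ) / 3 = π / 3 + π := by
    rw [Fin.val_two, Nat.cast_ofNat]; ring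
  rw [unitCubeRoot_eq_mk, this, cos_add_pi, sin_add_pi, cos_pi_div_three, sin_pi_div_three]
  norm_num

lemma forall_mem_range_unitCubeRoot {P : ℂ → Prop} :
    (∀ z ∈ range unitCubeRoot, P z) ↔ P 1 ∧ P ⟨-1 / 2, √3 / 2⟩ ∧ P ⟨-1 / 2, -(√3 / 2)⟩ := by
  rw [forall_mem_range]
  simp only [Fin.forall_fin_succ, Fin.succ_zero_eq_one, Fin.succ_one_eq_two, unitCubeRoot_zero,
    unitCubeRoot_one, unitCubeRoot_two, IsEmpty.forall_iff, and_true]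

lemma isCompact_equilateralTriangle : IsCompact equilateralTriangle :=
  equilateralTriangle_eq_convexHull ▸ (finite_range unitCubeRoot).isCompact_convexHull (𝕜 := ℝ)

lemma unitCubeRoot_mem_equilateralTriangle (k : Fin 3) : unitCubeRoot k ∈ equilateralTriangle :=
  equilateralTriangle_eq_convexHull ▸ subset_convexHull ℝ _ (mem_range_self k)

lemma le_widthAlong_mul_widthAlong_equilateralTriangle (t : ℝ) :
    3 * √3 / 2 ≤ widthAlong equilateralTriangle (cos t) (sin t) *
      widthAlong equilateralTriangle (-sin t) (cos t) := by
  refine le_of_eq_of_le ?_ (abs_im_conj_mul_le_widthAlong_mul_widthAlong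
    isCompact_equilateralTriangle unitCubeRoot_mem_equilateralTriangle (cos_sq_add_sin_sq t))
  have hdet : (conj (unitCubeRoot 1 - unitCubeRoot 0) * (unitCubeRoot 2 - unitCubeRoot 0)).im =
      3 * √3 / 2 := by
    simp only [unitCubeRoot_zero, unitCubeRoot_one, unitCubeRoot_two, Complex.mul_im,
      Complex.conj_re, Complex.conj_im, Complex.sub_re, Complex.sub_im, Complex.one_re,
      Complex.one_im]
    ring
  rw [hdet, abs_of_pos (by positivity)]

lemma widthAlong_equilateralTriangle_one_zero : widthAlong equilateralTriangle 1 0 = 3 / 2 := by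
  rw [equilateralTriangle_eq_convexHull,
    widthAlong_convexHull (s := range unitCubeRoot) ⟨0, unitCubeRoot_zero⟩ ⟨1, unitCubeRoot_one⟩]
  · norm_num [coordAlong]
  all_goals rw [forall_mem_range_unitCubeRoot]; norm_num [coordAlong]

lemma widthAlong_equilateralTriangle_zero_one : widthAlong equilateralTriangle 0 1 = √3 := by
  rw [equilateralTriangle_eq_convexHull,
    widthAlong_convexHull (s := range unitCubeRoot) ⟨1, unitCubeRoot_one⟩ ⟨2, unitCubeRoot_two⟩]
  · norm_num [coordAlong]
  all_goals rw [forall_mem_range_unitCubeRoot]; norm_num [coordAlong]; positivity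

lemma coordAlong_le_of_mem_equilateralTriangle {p q c : ℝ} (h0 : p ≤ c)
    (h1 : -p / 2 + √3 / 2 * q ≤ c) (h2 : -p / 2 - √3 / 2 * q ≤ c) {z : ℂ}
    (hz : z ∈ equilateralTriangle) : coordAlong p q z ≤ c := by
  rw [equilateralTriangle_eq_convexHull] at hz
  refine convexHull_min (forall_mem_range_unitCubeRoot.2 ⟨?_, ?_, ?_⟩)
    (convex_halfSpace_le (isLinearMap_coordAlong p q) c) hz <;>
    simp only [mem_ofPred_eq, coordAlong, Complex.one_re, Complex.one_im] <;> linarith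

lemma mem_equilateralTriangle_iff {z : ℂ} : z ∈ equilateralTriangle ↔
    z.re ∈ Icc (-1 / 2) 1 ∧ z.im ∈ Icc ((z.re - 1) / √3) ((1 - z.re) / √3) := by
  have h3 : √3 * √3 = 3 := mul_self_sqrt (by norm_num)
  have h3pos : 0 < √3 := by positivity
  simp only [mem_Icc, div_le_iff₀ h3pos, le_div_iff₀ h3pos]
  constructor
  · intro hz
    have hre := coordAlong_le_of_mem_equilateralTriangle (p := -1) (q := 0) (c := 1 / 2)
      (by norm_num) (by norm_num) (by norm_num) hz
    have hplus := coordAlong_le_of_mem_equilateralTriangle (p := 1) (q := √3) (c := 1)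
      le_rfl (by linarith) (by linarith) hz
    have hminus := coordAlong_le_of_mem_equilateralTriangle (p := 1) (q := -√3) (c := 1)
      le_rfl (by linarith) (by linarith) hz
    simp only [coordAlong] at hre hplus hminus
    refine ⟨⟨?_, ?_⟩, ?_, ?_⟩ <;> linarith
  · rintro ⟨⟨hx0, hx1⟩, hy0, hy1⟩
    rw [equilateralTriangle_eq_convexHull]
    -- the barycentric coordinates of `z`
    refine mem_convexHull_of_exists_fintype
      ![(2 * z.re + 1) / 3, (1 - z.re + √3 * z.im) / 3, (1 - z.re - √3 * z.im) / 3] unitCubeRoot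
      (fun k => ?_) ?_ (fun k => mem_range_self k) ?_
    · fin_cases k <;> simp only [Fin.zero_eta, Fin.mk_one, Fin.reduceFinMk, Fin.isValue,
        Matrix.cons_val_zero, Matrix.cons_val_one, Matrix.cons_val] <;> linarith
    · simp only [Fin.sum_univ_three, Matrix.cons_val_zero, Matrix.cons_val_one,
        Matrix.cons_val_two, Matrix.tail_cons, Matrix.head_cons]
      ring
    · apply Complex.ext <;>
        simp only [Fin.sum_univ_three, Complex.add_re, Complex.add_im, Complex.smul_re,
          Complex.smul_im, smul_eq_mul, unitCubeRoot_zero, unitCubeRoot_one, unitCubeRoot_two,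
          Complex.one_re, Complex.one_im, Matrix.cons_val_zero, Matrix.cons_val_one,
          Matrix.cons_val_two, Matrix.tail_cons, Matrix.head_cons]
      · ring
      · linear_combination z.im / 3 * h3

lemma volume_equilateralTriangle : volume equilateralTriangle = ENNReal.ofReal (3 * √3 / 4) := by
  have hf : Measurable fun x : ℝ => (x - 1) / √3 := by fun_prop
  have hg : Measurable fun x : ℝ => (1 - x) / √3 := by fun_prop
  have hT : equilateralTriangle = Complex.measurableEquivRealProd ⁻¹'
      {p : ℝ × ℝ | p.1 ∈ Icc (-1 / 2) 1 ∧ p.2 ∈ Icc ((p.1 - 1) / √3) ((1 - p.1) / √3)} := by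
    ext z; exact mem_equilateralTriangle_iff
  rw [hT, Complex.volume_preserving_equiv_real_prod.measure_preimage
      (measurableSet_region_between_cc hf hg measurableSet_Icc).nullMeasurableSet,
    Measure.volume_eq_prod, volume_region_between_cc_eq_lintegral hf hg measurableSet_Icc,
    ← ofReal_integral_eq_lintegral_ofReal]
  · congr 1
    have h : ∀ x : ℝ, (1 - x) / √3 - (x - 1) / √3 = 2 / √3 * (1 - x) := fun x => by ring
    simp only [h]
    rw [integral_Icc_eq_integral_Ioc, ← intervalIntegral.integral_of_le (by norm_num),
      intervalIntegral.integral_const_mul, intervalIntegral.integral_comp_sub_left (fun x => x),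
      integral_id]
    field_simp
    norm_num
  · exact (by fun_prop : Continuous fun x : ℝ => (1 - x) / √3 - (x - 1) / √3).integrableOn_Icc
  · refine ae_restrict_of_forall_mem measurableSet_Icc fun x hx => ?_
    change 0 ≤ (1 - x) / √3 - (x - 1) / √3
    rw [← sub_div]
    exact div_nonneg (by linarith [hx.2]) (sqrt_nonneg 3)

theorem equilateral_triangle_min_width_product :
    sInf ((fun t : ℝ =>
        (sSup ((fun z : ℂ => z.re * cos t + z.im * sin t) '' equilateralTriangle) -
          sInf ((fun z : ℂ => z.re * cos t + z.im * sin t) '' equilateralTriangle)) *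
        (sSup ((fun z : ℂ => z.re * (-sin t) + z.im * cos t) '' equilateralTriangle) -
          sInf ((fun z : ℂ => z.re * (-sin t) + z.im * cos t) '' equilateralTriangle))) ''
      Set.Ico 0 (2 * π))
      = 3 * Real.sqrt 3 / 2 ∧
    (volume equilateralTriangle).toReal = 3 * Real.sqrt 3 / 4 ∧
    3 * Real.sqrt 3 / 2 = 2 * (volume equilateralTriangle).toReal := by
  have harea : (volume equilateralTriangle).toReal = 3 * √3 / 4 := by
    rw [volume_equilateralTriangle, ENNReal.toReal_ofReal (by positivity)]
  have hattained : widthAlong equilateralTriangle (cos 0) (sin 0) *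
      widthAlong equilateralTriangle (-sin 0) (cos 0) = 3 * √3 / 2 := by
    simp only [cos_zero, sin_zero, neg_zero, widthAlong_equilateralTriangle_one_zero,
      widthAlong_equilateralTriangle_zero_one]
    ring
  refine ⟨IsLeast.csInf_eq ⟨⟨0, ⟨le_rfl, by positivity⟩, hattained⟩, forall_mem_image.2
    fun t _ => le_widthAlong_mul_widthAlong_equilateralTriangle t⟩, harea, by rw [harea]; ring⟩
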